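/- Assume BK independence (no predicate symbol occurring in the body of a rule of the background knowledge B occurs in the head of a rule of any program under consideration) and E⁺ ≠ ∅. Let S be the set of all non-separable promising programs, and suppose some definite program is a solution. Then: (i) there exists a finite union of members of S that is an optimal solution; and (ii) every union of members of S that is complete, consistent, and of minimal size among all complete and consistent unions of members of S is an optimal solution among all definite programs. -/
import Mathlib


/- A framework for definite logic programs (terms are variables or constants),
with Herbrand-interpretation semantics: for a definite theory, classical
first-order entailment of a ground atom coincides with truth in every
(Herbrand) model. -/

variable {V C P : Type}

/-- A term is a variable or a constant. -/
inductive Term (V C : Type) where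
  | var : V → Term V C
  | const : C → Term V C

/-- An atom: a predicate symbol applied to a list of terms. -/
structure Atom (V C P : Type) where
  pred : P
  args : List (Term V C)

/-- A definite clause (rule): a head atom and a list of body atoms,
read as ∀x̄ (B₁ ∧ … ∧ Bₙ → A). -/
structure Rule (V C P : Type) where
  head : Atom V C P
  body : List (Atom V C P)

noncomputable instance : DecidableEq (Rule V C P) := Classical.decEq _

/-- A ground atom: a predicate symbol applied to constants. -/
structure GroundAtom (C P : Type) where
  pred : P
  args : List C

/-- A (definite) program is a finite set of definite clauses. -/
abbrev Program (V C P : Type) := Finset (Rule V C P)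

/-- Applying a substitution to a term. -/
def Term.subst (θ : V → Term V C) : Term V C → Term V C
  | .var v => θ v
  | .const c => .const c

/-- Applying a substitution to an atom. -/
def Atom.subst (θ : V → Term V C) (a : Atom V C P) : Atom V C P :=
  ⟨a.pred, a.args.map (Term.subst θ)⟩

/-- Grounding a term by assigning constants to variables. -/
def Term.groundWith (g : V → C) : Term V C → C
  | .var v => g v
  | .const c => c

/-- Grounding an atom. -/
def Atom.groundWith (g : V → C) (a : Atom V C P) : GroundAtom C P :=
  ⟨a.pred, a.args.map (Term.groundWith g)⟩

/-- A (Herbrand) interpretation: a set of ground atoms. -/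
abbrev Interp (C P : Type) := Set (GroundAtom C P)

/-- A rule holds in an interpretation if every ground instance whose body
atoms are all true has a true head. -/
def Rule.holds (I : Interp C P) (r : Rule V C P) : Prop :=
  ∀ g : V → C, (∀ b ∈ r.body, Atom.groundWith g b ∈ I) → Atom.groundWith g r.head ∈ I

/-- An interpretation is a model of a program if all its rules hold in it. -/
def Program.isModel (I : Interp C P) (T : Program V C P) : Prop :=
  ∀ r ∈ T, Rule.holds I r

/-- Entailment of a ground atom by a definite program: truth in every
(Herbrand) model.  For definite theories this coincides with classical
first-order entailment of a ground atom. -/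
def Entails (T : Program V C P) (e : GroundAtom C P) : Prop :=
  ∀ I : Interp C P, Program.isModel I T → e ∈ I

/-- The predicate symbols occurring in the head of a rule of `h`. -/
def Program.headPreds (h : Program V C P) : Set P :=
  { p | ∃ r ∈ h, r.head.pred = p }

/-- The predicate symbols occurring in the body of a rule of `h`. -/
def Program.bodyPreds (h : Program V C P) : Set P :=
  { p | ∃ r ∈ h, ∃ a ∈ r.body, a.pred = p }

/-- A program is separable when (i) it has at least two rules and (ii) no
predicate symbol in the head of one of its rules also appears in the body
of one of its rules. -/
def Program.Separable (h : Program V C P) : Prop :=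
  2 ≤ h.card ∧ ∀ p ∈ Program.headPreds h, p ∉ Program.bodyPreds h

/-- The number of literals in a rule: its head plus its body literals. -/
def Rule.size (r : Rule V C P) : ℕ := 1 + r.body.length

/-- The size of a program: total number of literals occurring in its rules. -/
def Program.size (h : Program V C P) : ℕ := ∑ r ∈ h, Rule.size r

/-- BK independence: no predicate symbol occurring in the body of a rule of
the background knowledge `B` occurs in the head of a rule of `h`. -/
def BKIndep (B h : Program V C P) : Prop :=
  ∀ p ∈ Program.bodyPreds B, p ∉ Program.headPreds h

/-- `h` is complete: `B ∪ h ⊨ e` for every positive example `e`. -/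
def Complete (B h : Program V C P) (Epos : Finset (GroundAtom C P)) : Prop :=
  ∀ e ∈ Epos, Entails (B ∪ h) e

/-- `h` is consistent: `B ∪ h ⊭ e` for every negative example `e`. -/
def Consistent (B h : Program V C P) (Eneg : Finset (GroundAtom C P)) : Prop :=
  ∀ e ∈ Eneg, ¬ Entails (B ∪ h) e

/-- `h` is partially complete: `B ∪ h ⊨ e` for some positive example `e`. -/
def PartiallyComplete (B h : Program V C P) (Epos : Finset (GroundAtom C P)) : Prop :=
  ∃ e ∈ Epos, Entails (B ∪ h) e

/-- `h` is totally incomplete: `B ∪ h ⊭ e` for every positive example `e`. -/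
def TotallyIncomplete (B h : Program V C P) (Epos : Finset (GroundAtom C P)) : Prop :=
  ∀ e ∈ Epos, ¬ Entails (B ∪ h) e

/-- A solution is a complete and consistent program. -/
def Solution (B h : Program V C P) (Epos Eneg : Finset (GroundAtom C P)) : Prop :=
  Complete B h Epos ∧ Consistent B h Eneg

/-- A promising program is a partially complete and consistent program. -/
def Promising (B h : Program V C P) (Epos Eneg : Finset (GroundAtom C P)) : Prop :=
  PartiallyComplete B h Epos ∧ Consistent B h Eneg

/-- An optimal solution: a solution of minimal size among all solutions. -/
def OptimalSolution (B h : Program V C P) (Epos Eneg : Finset (GroundAtom C P)) : Prop :=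
  Solution B h Epos Eneg ∧
    ∀ h' : Program V C P, Solution B h' Epos Eneg → Program.size h ≤ Program.size h'

/-- Clause `r₁` subsumes clause `r₂`: some substitution maps the head of `r₁`
to the head of `r₂` and every body literal of `r₁` to a body literal of `r₂`
(i.e. `r₁θ ⊆ r₂` viewing definite clauses as sets of literals). -/
def Rule.Subsumes (r₁ r₂ : Rule V C P) : Prop :=
  ∃ θ : V → Term V C, Atom.subst θ r₁.head = r₂.head ∧
    ∀ b ∈ r₁.body, Atom.subst θ b ∈ r₂.body

/-- `h₁` subsumes `h₂` (`h₁ ⪯ h₂`): every clause of `h₂` is subsumed by some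
clause of `h₁`.  `h₂` is a specialisation of `h₁`, and `h₁` a generalisation
of `h₂`. -/
def Program.Subsumes (h₁ h₂ : Program V C P) : Prop :=
  ∀ r₂ ∈ h₂, ∃ r₁ ∈ h₁, Rule.Subsumes r₁ r₂

/-- `h` is a (finite) union of members of `S`. -/
def IsUnionOf {V C P : Type} (S : Set (Program V C P)) (h : Program V C P) : Prop :=
  ∃ (n : ℕ) (f : Fin n → Program V C P),
    (∀ i, f i ∈ S) ∧ h = Finset.univ.biUnion f

lemma entails_mono {V C P : Type} {T T' : Program V C P} (hsub : T ⊆ T')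
    {e : GroundAtom C P} (h : Entails T e) : Entails T' e :=
  fun I hI => h I (fun r hr => hI r (hsub hr))

lemma size_mono {V C P : Type} {g h : Program V C P} (hsub : g ⊆ h) :
    Program.size g ≤ Program.size h :=
  Finset.sum_le_sum_of_subset hsub

/-- Under BK independence and separability, an entailed example is entailed
by a proper subprogram. -/
lemma sep_reduce {V C P : Type} (B g : Program V C P) (hBK : BKIndep B g)
    (hsep : Program.Separable g) (e : GroundAtom C P)
    (he : Entails (B ∪ g) e) :
    ∃ g' : Program V C P, g' ⊂ g ∧ Entails (B ∪ g') e := by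
  set MB : Interp C P := {a | Entails B a} with hMB
  set I : Interp C P := MB ∪ {a | ∃ r ∈ g, ∃ gr : V → C,
      (∀ b ∈ r.body, Atom.groundWith gr b ∈ MB) ∧ a = Atom.groundWith gr r.head} with hIdef
  have hcard := hsep.1
  have hgnonempty : g.Nonempty := by rw [← Finset.card_pos]; omega
  have hmodel : Program.isModel I (B ∪ g) := by
    intro r hr
    rcases Finset.mem_union.mp hr with hrB | hrg
    · intro gr hb
      have hbodyMB : ∀ b ∈ r.body, Atom.groundWith gr b ∈ MB := by
        intro b hbb
        rcases hb b hbb with h1 | h2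
        · exact h1
        · exfalso
          obtain ⟨r', hr'g, gr', -, heq⟩ := h2
          have hp : (Atom.groundWith gr b).pred ∈ Program.bodyPreds B :=
            ⟨r, hrB, b, hbb, rfl⟩
          have hp2 : (Atom.groundWith gr b).pred ∈ Program.headPreds g := by
            rw [heq]; exact ⟨r', hr'g, rfl⟩
          exact hBK _ hp hp2
      left
      intro I' hI'
      exact hI' r hrB gr (fun b hbb => hbodyMB b hbb I' hI')
    · intro gr hb
      have hbodyMB : ∀ b ∈ r.body, Atom.groundWith gr b ∈ MB := by
        intro b hbb
        rcases hb b hbb with h1 | h2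
        · exact h1
        · exfalso
          obtain ⟨r', hr'g, gr', -, heq⟩ := h2
          have hp2 : (Atom.groundWith gr b).pred ∈ Program.headPreds g := by
            rw [heq]; exact ⟨r', hr'g, rfl⟩
          have hp : (Atom.groundWith gr b).pred ∈ Program.bodyPreds g :=
            ⟨r, hrg, b, hbb, rfl⟩
          exact hsep.2 _ hp2 hp
      right
      exact ⟨r, hrg, gr, hbodyMB, rfl⟩
  rcases he I hmodel with h1 | h2
  · refine ⟨∅, Finset.empty_ssubset.mpr hgnonempty, ?_⟩
    rw [Finset.union_empty]; exact h1
  · obtain ⟨r, hrg, gr, hbody, heq⟩ := h2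
    refine ⟨{r}, ?_, ?_⟩
    · refine (Finset.ssubset_iff_of_subset (Finset.singleton_subset_iff.mpr hrg)).mpr ?_
      obtain ⟨r2, hr2, hne⟩ := Finset.exists_mem_ne (show 1 < g.card by omega) r
      exact ⟨r2, hr2, by simp [hne]⟩
    · intro I' hI'
      have hBm : Program.isModel I' B := fun rb hrb => hI' rb (Finset.mem_union_left _ hrb)
      have := hI' r (Finset.mem_union_right _ (Finset.mem_singleton_self r)) gr
        (fun b hbb => hbody b hbb I' hBm)
      rw [heq]; exact this

/-- Any entailed example is entailed by a non-separable subprogram. -/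
lemma exists_min_entailing {V C P : Type} (B h : Program V C P)
    (hBK : ∀ h' : Program V C P, BKIndep B h') (e : GroundAtom C P)
    (he : Entails (B ∪ h) e) :
    ∃ g : Program V C P, g ⊆ h ∧ Entails (B ∪ g) e ∧ ¬ Program.Separable g := by
  classical
  let cand := h.powerset.filter (fun g => Entails (B ∪ g) e)
  have hne : cand.Nonempty := ⟨h, by simp [cand, he]⟩
  obtain ⟨g, hgc, hmin⟩ := Finset.exists_min_image cand Finset.card hne
  simp only [cand, Finset.mem_filter, Finset.mem_powerset] at hgc
  refine ⟨g, hgc.1, hgc.2, ?_⟩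
  intro hsep
  obtain ⟨g', hsub, hent⟩ := sep_reduce B g (hBK g) hsep e hgc.2
  have hg'c : g' ∈ cand := by
    simp only [cand, Finset.mem_filter, Finset.mem_powerset]
    exact ⟨hsub.subset.trans hgc.1, hent⟩
  exact absurd (Finset.card_lt_card hsub) (not_lt.mpr (hmin g' hg'c))

/-- Under BK independence (for any program under consideration)
and `E⁺ ≠ ∅`, if some program is a solution then, with `S` the set of all
non-separable promising programs: (i) some finite union of members of `S` is an
optimal solution; (ii) every union of members of `S` that is complete,
consistent and of minimal size among all complete and consistent unions of
members of `S` is an optimal solution among all definite programs. -/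
theorem combine_stage_returns_optimal_solution {V C P : Type}
    (B : Program V C P) (Epos Eneg : Finset (GroundAtom C P))
    (hBK : ∀ h : Program V C P, BKIndep B h)
    (hpos : Epos.Nonempty)
    (hsol : ∃ h : Program V C P, Solution B h Epos Eneg) :
    (∃ h : Program V C P,
        IsUnionOf {g | ¬ Program.Separable g ∧ Promising B g Epos Eneg} h ∧
        OptimalSolution B h Epos Eneg) ∧
    (∀ h : Program V C P,
        IsUnionOf {g | ¬ Program.Separable g ∧ Promising B g Epos Eneg} h →
        Complete B h Epos → Consistent B h Eneg →
        (∀ h' : Program V C P,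
          IsUnionOf {g | ¬ Program.Separable g ∧ Promising B g Epos Eneg} h' →
          Complete B h' Epos → Consistent B h' Eneg →
          Program.size h ≤ Program.size h') →
        OptimalSolution B h Epos Eneg) := by
  classical
  set S : Set (Program V C P) :=
    {g | ¬ Program.Separable g ∧ Promising B g Epos Eneg} with hS
  -- take a solution of minimal size
  obtain ⟨h0, hsol0⟩ := hsol
  have hPn : ∃ n : ℕ, ∃ h : Program V C P, Solution B h Epos Eneg ∧ Program.size h = n :=
    ⟨_, h0, hsol0, rfl⟩
  obtain ⟨hstar, hsolstar, hsizestar⟩ := Nat.find_spec hPn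
  have hopt : ∀ h' : Program V C P, Solution B h' Epos Eneg →
      Program.size hstar ≤ Program.size h' := by
    intro h' hsol'
    rw [hsizestar]
    exact Nat.find_min' hPn ⟨h', hsol', rfl⟩
  -- decompose: for each positive example, a non-separable entailing subprogram
  have hdec : ∀ e : {x // x ∈ Epos}, ∃ g : Program V C P,
      g ⊆ hstar ∧ Entails (B ∪ g) (e : GroundAtom C P) ∧ ¬ Program.Separable g :=
    fun e => exists_min_entailing B hstar hBK e (hsolstar.1 e e.2)
  choose D hD1 hD2 hD3 using hdec
  have hDcons : ∀ e : {x // x ∈ Epos}, Consistent B (D e) Eneg := by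
    intro e e' he' hent
    exact hsolstar.2 e' he'
      (entails_mono (Finset.union_subset_union_right (hD1 e)) hent)
  set f : Fin Epos.card → Program V C P := fun i => D (Epos.equivFin.symm i) with hf
  set hU : Program V C P := Finset.univ.biUnion f with hUdef
  have hfS : ∀ i, f i ∈ S := by
    intro i
    refine ⟨hD3 _, ⟨_, (Epos.equivFin.symm i).2, hD2 _⟩, hDcons _⟩
  have hUsub : hU ⊆ hstar := by
    intro r hr
    obtain ⟨i, -, hri⟩ := Finset.mem_biUnion.mp hr
    exact hD1 _ hri
  have hUcomplete : Complete B hU Epos := by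
    intro e he
    have hsubU : D ⟨e, he⟩ ⊆ hU := by
      have : D ⟨e, he⟩ = f (Epos.equivFin ⟨e, he⟩) := by
        simp [hf]
      rw [this]
      exact Finset.subset_biUnion_of_mem f (Finset.mem_univ _)
    exact entails_mono (Finset.union_subset_union_right hsubU) (hD2 ⟨e, he⟩)
  have hUcons : Consistent B hU Eneg := by
    intro e' he' hent
    exact hsolstar.2 e' he'
      (entails_mono (Finset.union_subset_union_right hUsub) hent)
  have hUsolution : Solution B hU Epos Eneg := ⟨hUcomplete, hUcons⟩
  have hUunion : IsUnionOf S hU := ⟨Epos.card, f, hfS, rfl⟩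
  have hUopt : OptimalSolution B hU Epos Eneg := by
    refine ⟨hUsolution, fun h' hsol' => ?_⟩
    exact le_trans (size_mono hUsub) (hopt h' hsol')
  refine ⟨⟨hU, hUunion, hUopt⟩, ?_⟩
  intro h hun hc hcons hmin
  refine ⟨⟨hc, hcons⟩, fun h' hsol' => ?_⟩
  have h1 : Program.size h ≤ Program.size hU :=
    hmin hU hUunion hUcomplete hUcons
  exact le_trans h1 (hUopt.2 h' hsol')
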